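/- The minimum of |z| over all complex roots z of the polynomial q⁶ + 2q⁵ + 3q⁴ + 3q² + 2q + 1 lies strictly between R_* = (3−√5)/2 and R_{√2} = (1 + √2 − √(2√2 − 1))/2; that is, R_* < R_{√3} < R_{√2}, where R_{√3} denotes this minimal root modulus (the radius of convergence of [√3]_q). -/

import Mathlib

/-!
The polynomial is palindromic: with `t = q + q⁻¹` it equals `q³ (t³ + 2t² - 4)`. The Joukowski map
`q ↦ q + q⁻¹` sends the annulus `c ≤ ‖q‖ ≤ 1` into the filled ellipse with semi-axes `c + c⁻¹` and
`c⁻¹ - c`, which for `c = R_{√2}` are `1 + √2` and `√(2√2 - 1)`. The cubic has a real root `x ≥ 1.13`,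
and its non-real roots `-(2 + x)/2 ± i √(3x² + 4x - 4)/2` lie outside this ellipse, so their preimages
in the unit disc are roots of modulus `< R_{√2}`.

For the lower bound, the polynomial equals `(1 + q)²(1 + q⁴) + 2q²(1 + q²)`, and the triangle inequality
shows that the two terms cannot cancel when `‖q‖ ≤ R_*`. A root of least modulus exists because the
zero set is closed.
-/

/-- `R_* = (3 − √5)/2`. -/
noncomputable def Rstar : ℝ := (3 - Real.sqrt 5) / 2

/-- `R_{√2} = (1 + √2 − √(2√2 − 1))/2`. -/
noncomputable def Rsqrt2 : ℝ := (1 + Real.sqrt 2 - Real.sqrt (2 * Real.sqrt 2 - 1)) / 2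

theorem IsClosed.exists_forall_norm_le {E : Type*} [NormedAddCommGroup E] [ProperSpace E]
    {s : Set E} (hs : IsClosed s) (hne : s.Nonempty) : ∃ z ∈ s, ∀ w ∈ s, ‖z‖ ≤ ‖w‖ := by
  obtain ⟨z, hz, hdist⟩ := hs.exists_infDist_eq_dist hne 0
  refine ⟨z, hz, fun w hw => ?_⟩
  have := Metric.infDist_le_dist_of_mem hw (x := 0)
  rwa [hdist, dist_zero_left, dist_zero_left] at this

theorem add_inv_le_add_inv_of_le_of_le_one {r c : ℝ} (hc : 0 < c) (hcr : c ≤ r) (hr : r ≤ 1) :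
    r + r⁻¹ ≤ c + c⁻¹ := by
  have hr0 : 0 < r := hc.trans_le hcr
  have hdiff : c + c⁻¹ - (r + r⁻¹) = (r - c) * (1 - r * c) / (r * c) := by field_simp; ring
  have : 0 ≤ (r - c) * (1 - r * c) / (r * c) :=
    div_nonneg (mul_nonneg (by linarith) (by nlinarith)) (by positivity)
  linarith

theorem inv_sub_div_two_of_sq_sub_sq_eq_four {a b : ℝ} (h : a ^ 2 - b ^ 2 = 4) :
    ((a - b) / 2)⁻¹ = (a + b) / 2 :=
  inv_eq_of_mul_eq_one_right (by linear_combination h / 4)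

namespace Complex

noncomputable def ellipseForm (a b : ℝ) (t : ℂ) : ℝ := (t.re / a) ^ 2 + (t.im / b) ^ 2

theorem exists_add_inv_eq (t : ℂ) : ∃ q : ℂ, q ≠ 0 ∧ ‖q‖ ≤ 1 ∧ q + q⁻¹ = t := by
  obtain ⟨s, hs⟩ := IsAlgClosed.exists_eq_mul_self (t ^ 2 - 4)
  have hprod : (t - s) / 2 * ((t + s) / 2) = 1 := by linear_combination hs / 4
  have hnorm : ‖(t - s) / 2‖ * ‖(t + s) / 2‖ = 1 := by rw [← norm_mul, hprod, norm_one]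
  rcases le_total ‖(t - s) / 2‖ 1 with h | h
  · exact ⟨_, left_ne_zero_of_mul_eq_one hprod, h, by rw [inv_eq_of_mul_eq_one_right hprod]; ring⟩
  · refine ⟨_, right_ne_zero_of_mul_eq_one hprod, ?_, by rw [inv_eq_of_mul_eq_one_left hprod]; ring⟩
    nlinarith [norm_nonneg ((t + s) / 2)]

theorem ellipseForm_add_inv_le_one {q : ℂ} {c : ℝ} (hc : 0 < c) (hcq : c ≤ ‖q‖) (hq : ‖q‖ ≤ 1) :
    ellipseForm (c + c⁻¹) (c⁻¹ - c) (q + q⁻¹) ≤ 1 := by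
  set r := ‖q‖
  have hr : 0 < r := hc.trans_le hcq
  have hnormSq : normSq q = r ^ 2 := normSq_eq_norm_sq q
  have hre : (q + q⁻¹).re = q.re / r * (r + r⁻¹) := by
    rw [add_re, inv_re, hnormSq]; field_simp
  have him : (q + q⁻¹).im = -(q.im / r * (r⁻¹ - r)) := by
    rw [add_im, inv_im, hnormSq]; field_simp; ring
  have hunit : (q.re / r) ^ 2 + (q.im / r) ^ 2 = 1 := by
    rw [div_pow, div_pow, ← add_div, div_eq_one_iff_eq (by positivity), ← hnormSq, normSq_apply]
    ring
  have hA : ((r + r⁻¹) / (c + c⁻¹)) ^ 2 ≤ 1 := by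
    rw [sq_le_one_iff₀ (by positivity)]
    exact div_le_one_of_le₀ (add_inv_le_add_inv_of_le_of_le_one hc hcq hq) (by positivity)
  have hB : ((r⁻¹ - r) / (c⁻¹ - c)) ^ 2 ≤ 1 := by
    have h1 : 1 ≤ r⁻¹ := (one_le_inv₀ hr).2 hq
    have h2 : r⁻¹ ≤ c⁻¹ := inv_anti₀ hc hcq
    rw [sq_le_one_iff₀ (div_nonneg (by linarith) (by linarith))]
    exact div_le_one_of_le₀ (by linarith) (by linarith)
  calc ellipseForm (c + c⁻¹) (c⁻¹ - c) (q + q⁻¹)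
      = (q.re / r) ^ 2 * ((r + r⁻¹) / (c + c⁻¹)) ^ 2
        + (q.im / r) ^ 2 * ((r⁻¹ - r) / (c⁻¹ - c)) ^ 2 := by rw [ellipseForm, hre, him]; ring
    _ ≤ (q.re / r) ^ 2 * 1 + (q.im / r) ^ 2 * 1 := by gcongr
    _ = 1 := by rw [mul_one, mul_one, hunit]

theorem exists_norm_lt_add_inv_eq {t : ℂ} {c : ℝ} (hc : 0 < c)
    (ht : 1 < ellipseForm (c + c⁻¹) (c⁻¹ - c) t) : ∃ q : ℂ, q ≠ 0 ∧ ‖q‖ < c ∧ q + q⁻¹ = t := by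
  obtain ⟨q, hq0, hq1, rfl⟩ := exists_add_inv_eq t
  exact ⟨q, hq0, lt_of_not_ge fun hcq => (ellipseForm_add_inv_le_one hc hcq hq1).not_gt ht, rfl⟩

end Complex

open Complex

theorem sextic_eq_pow_three_mul_cubic (q : ℂ) (hq : q ≠ 0) :
    q ^ 6 + 2 * q ^ 5 + 3 * q ^ 4 + 3 * q ^ 2 + 2 * q + 1
      = q ^ 3 * ((q + q⁻¹) ^ 3 + 2 * (q + q⁻¹) ^ 2 - 4) := by
  field_simp
  ring

theorem exists_cubic_root_ge : ∃ x : ℝ, 113 / 100 ≤ x ∧ x ^ 3 + 2 * x ^ 2 - 4 = 0 := by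
  have hcont : ContinuousOn (fun x : ℝ => x ^ 3 + 2 * x ^ 2 - 4) (Set.Icc (113 / 100) 2) := by
    fun_prop
  obtain ⟨x, hx, hx0⟩ := intermediate_value_Icc (by norm_num) hcont
    (show (0 : ℝ) ∈ Set.Icc _ _ by norm_num)
  exact ⟨x, hx.1, hx0⟩

theorem cubic_eq_zero_of_real_root {x : ℝ} (hx : x ^ 3 + 2 * x ^ 2 - 4 = 0) {y : ℝ}
    (hy : y ^ 2 = (3 * x ^ 2 + 4 * x - 4) / 4) :
    (⟨-(2 + x) / 2, y⟩ : ℂ) ^ 3 + 2 * (⟨-(2 + x) / 2, y⟩ : ℂ) ^ 2 - 4 = 0 := by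
  set t : ℂ := ⟨-(2 + x) / 2, y⟩
  have ht : t = -(2 + x) / 2 + y * I := by apply Complex.ext <;> simp [t]
  have hquad : t ^ 2 + (2 + x) * t + (x ^ 2 + 2 * x) = 0 := by
    have hy' : (y : ℂ) ^ 2 = (3 * x ^ 2 + 4 * x - 4) / 4 := by exact_mod_cast hy
    rw [ht]
    linear_combination y ^ 2 * I_sq - hy'
  have hx' : (x : ℂ) ^ 3 + 2 * x ^ 2 - 4 = 0 := by exact_mod_cast hx
  linear_combination (t - x) * hquad + hx'

theorem exists_cubic_root_one_lt_ellipseForm :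
    ∃ t : ℂ, t ^ 3 + 2 * t ^ 2 - 4 = 0 ∧ 1 < ellipseForm (1 + √2) √(2 * √2 - 1) t := by
  obtain ⟨x, hx, hroot⟩ := exists_cubic_root_ge
  have h2 : √2 ^ 2 = 2 := Real.sq_sqrt (by norm_num)
  have h2l : (1414 : ℝ) / 1000 ≤ √2 := by
    rw [Real.le_sqrt (by norm_num) (by norm_num)]; norm_num
  have hb : 0 < 2 * √2 - 1 := by linarith
  have hy : (√(3 * x ^ 2 + 4 * x - 4) / 2) ^ 2 = (3 * x ^ 2 + 4 * x - 4) / 4 := by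
    rw [div_pow, Real.sq_sqrt (by nlinarith)]; norm_num
  refine ⟨_, cubic_eq_zero_of_real_root hroot hy, ?_⟩
  rw [ellipseForm, div_pow _ √(2 * √2 - 1), Real.sq_sqrt hb.le, hy, div_pow, neg_div, neg_sq, div_pow,
    div_div, div_add_div _ _ (by positivity) (by positivity), one_lt_div (by positivity)]
  nlinarith [mul_nonneg (sub_nonneg.2 h2l) (sub_nonneg.2 hx),
    mul_nonneg (mul_nonneg (sub_nonneg.2 h2l) (sub_nonneg.2 hx)) (sub_nonneg.2 hx)]

theorem Rsqrt2_inv : Rsqrt2⁻¹ = (1 + √2 + √(2 * √2 - 1)) / 2 := by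
  have h2 : √2 ^ 2 = 2 := Real.sq_sqrt (by norm_num)
  have h3 : √(2 * √2 - 1) ^ 2 = 2 * √2 - 1 := Real.sq_sqrt (by nlinarith [Real.sqrt_nonneg 2])
  exact inv_sub_div_two_of_sq_sub_sq_eq_four (by linear_combination h2 - h3)

theorem Rsqrt2_pos : 0 < Rsqrt2 := by
  rw [← inv_pos, Rsqrt2_inv]
  positivity

theorem Rsqrt2_add_inv : Rsqrt2 + Rsqrt2⁻¹ = 1 + √2 := by
  rw [Rsqrt2_inv, Rsqrt2]; ring

theorem Rsqrt2_inv_sub : Rsqrt2⁻¹ - Rsqrt2 = √(2 * √2 - 1) := by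
  rw [Rsqrt2_inv, Rsqrt2]; ring

theorem one_sub_Rstar_sq : (1 - Rstar) ^ 2 = Rstar := by
  have h5 : √5 ^ 2 = 5 := Real.sq_sqrt (by norm_num)
  rw [Rstar]; linear_combination h5 / 4

theorem Rstar_pos : 0 < Rstar := by
  have : √5 < 3 := by rw [Real.sqrt_lt' (by norm_num)]; norm_num
  rw [Rstar]; linarith

theorem Rstar_lt_two_fifths : Rstar < 2 / 5 := by
  have : (11 : ℝ) / 5 < √5 := by rw [Real.lt_sqrt (by norm_num)]; norm_num
  rw [Rstar]; linarith

theorem two_mul_sq_mul_one_add_sq_lt_of_le_Rstar {r : ℝ} (h0 : 0 ≤ r) (hr : r ≤ Rstar) :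
    2 * r ^ 2 * (1 + r ^ 2) < (1 - r) ^ 2 * (1 - r ^ 4) := by
  have hs := one_sub_Rstar_sq
  have hs0 := Rstar_pos
  have hs1 := Rstar_lt_two_fifths
  set s := Rstar
  calc 2 * r ^ 2 * (1 + r ^ 2) ≤ 2 * s ^ 2 * (1 + s ^ 2) := by gcongr
    _ < s * (1 - s ^ 4) := by
      have hpos : 0 < s * (1 + s ^ 2) * (2 - 5 * s) := by
        have : 0 < 2 - 5 * s := by linarith
        positivity
      linear_combination hpos + s * (1 + s ^ 2) * hs
    _ = (1 - s) ^ 2 * (1 - s ^ 4) := by rw [hs]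
    _ ≤ (1 - r) ^ 2 * (1 - r ^ 4) := by
      have hs4 : s ^ 4 ≤ 1 := pow_le_one₀ hs0.le (by linarith)
      gcongr; linarith

theorem Rstar_lt_norm_of_root {w : ℂ}
    (hw : w ^ 6 + 2 * w ^ 5 + 3 * w ^ 4 + 3 * w ^ 2 + 2 * w + 1 = 0) : Rstar < ‖w‖ := by
  by_contra! hle
  set r := ‖w‖
  have hr1 : r ≤ 1 := hle.trans (Rstar_lt_two_fifths.le.trans (by norm_num))
  have hsplit : (1 + w) ^ 2 * (1 + w ^ 4) = -(2 * w ^ 2 * (1 + w ^ 2)) := by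
    linear_combination hw
  have hnorm : ‖1 + w‖ ^ 2 * ‖1 + w ^ 4‖ = 2 * r ^ 2 * ‖1 + w ^ 2‖ := by
    simpa only [norm_neg, norm_mul, norm_pow, RCLike.norm_ofNat] using congrArg norm hsplit
  have h1 : 1 - r ≤ ‖1 + w‖ := by
    simpa only [norm_one, norm_neg, sub_neg_eq_add] using norm_sub_norm_le (1 : ℂ) (-w)
  have h4 : 1 - r ^ 4 ≤ ‖1 + w ^ 4‖ := by
    have := norm_sub_norm_le (1 : ℂ) (-w ^ 4)
    rwa [norm_neg, norm_pow, norm_one, sub_neg_eq_add] at this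
  have h2 : ‖1 + w ^ 2‖ ≤ 1 + r ^ 2 := by
    have := norm_add_le (1 : ℂ) (w ^ 2)
    rwa [norm_pow, norm_one] at this
  have hr4 : 0 ≤ 1 - r ^ 4 := by linarith [pow_le_one₀ (norm_nonneg w) hr1 (n := 4)]
  refine (two_mul_sq_mul_one_add_sq_lt_of_le_Rstar (norm_nonneg w) hle).not_ge ?_
  calc (1 - r) ^ 2 * (1 - r ^ 4) ≤ ‖1 + w‖ ^ 2 * ‖1 + w ^ 4‖ := by gcongr
    _ = 2 * r ^ 2 * ‖1 + w ^ 2‖ := hnorm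
    _ ≤ 2 * r ^ 2 * (1 + r ^ 2) := by gcongr

theorem sqrt3_radius_between :
    ∃ z : ℂ,
      z ^ 6 + 2 * z ^ 5 + 3 * z ^ 4 + 3 * z ^ 2 + 2 * z + 1 = 0 ∧
      Rstar < ‖z‖ ∧ ‖z‖ < Rsqrt2 ∧
      ∀ w : ℂ, w ^ 6 + 2 * w ^ 5 + 3 * w ^ 4 + 3 * w ^ 2 + 2 * w + 1 = 0 → ‖z‖ ≤ ‖w‖ := by
  obtain ⟨t, ht, hout⟩ := exists_cubic_root_one_lt_ellipseForm
  rw [← Rsqrt2_add_inv, ← Rsqrt2_inv_sub] at hout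
  obtain ⟨q, hq0, hqc, rfl⟩ := exists_norm_lt_add_inv_eq Rsqrt2_pos hout
  have hq : q ^ 6 + 2 * q ^ 5 + 3 * q ^ 4 + 3 * q ^ 2 + 2 * q + 1 = 0 := by
    rw [sextic_eq_pow_three_mul_cubic q hq0, ht, mul_zero]
  obtain ⟨z, hz, hmin⟩ := IsClosed.exists_forall_norm_le
    (s := {w : ℂ | w ^ 6 + 2 * w ^ 5 + 3 * w ^ 4 + 3 * w ^ 2 + 2 * w + 1 = 0})
    (isClosed_eq (by fun_prop) continuous_const) ⟨q, hq⟩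
  exact ⟨z, hz, Rstar_lt_norm_of_root hz, (hmin q hq).trans_lt hqc, hmin⟩
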